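/- Let κ, χ be nonzero real numbers and Λ, Γ complex numbers with Re Λ ≠ 0, Re(Λ+Γ) ≠ 0, and Λ ≠ Γ. Fix ε ∈ ℝ and μ ∈ ℝ. Then (a₁,a₂) ∈ ℂ² solves the system (εκ + iχμ)a₁ + (Λ|a₁|² + Γ|a₂|²)a₁ = 0, (εκ + iχμ)a₂ + (Λ|a₂|² + Γ|a₁|²)a₂ = 0 if and only if one of the following holds: (i) a₁ = a₂ = 0; (ii) exactly one of a₁, a₂ is zero and the nonzero one has modulus r with Λr² = -(εκ + iχμ); (iii) |a₁| = |a₂| = r with (Λ+Γ)r² = -(εκ + iχμ). -/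

import Mathlib

/-!
Each equation factors as `aⱼ * (c + Λ|aⱼ|² + Γ|aₖ|²) = 0`. If both brackets vanish, their
difference is `(Λ - Γ)(|a₁|² - |a₂|²) = 0`, so `|a₁| = |a₂|`; if some `aⱼ = 0`, the other
bracket reduces to `Λ|aₖ|² = -c`.
-/

lemma bracket_pair_eq_zero_iff {R : Type*} [CommRing R] [NoZeroDivisors R] {c Λ Γ x y : R} (hne : Λ ≠ Γ) :
    (c + (Λ * x + Γ * y) = 0 ∧ c + (Λ * y + Γ * x) = 0) ↔ x = y ∧ (Λ + Γ) * x = -c := by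
  constructor
  · rintro ⟨h₁, h₂⟩
    have hxy : x = y := by
      have : (Λ - Γ) * (x - y) = 0 := by linear_combination h₁ - h₂
      simpa [sub_eq_zero, hne] using this
    exact ⟨hxy, by subst hxy; linear_combination h₁⟩
  · rintro ⟨rfl, h⟩
    constructor <;> linear_combination h

lemma mul_add_mul_eq_zero_iff {R : Type*} [Ring R] [NoZeroDivisors R] {c b a : R} :
    c * a + b * a = 0 ↔ a = 0 ∨ c + b = 0 := by
  rw [← add_mul, mul_eq_zero, or_comm]

lemma ofReal_norm_sq_eq_iff {E : Type*} [SeminormedAddCommGroup E] {a b : E} : (‖a‖ : ℂ) ^ 2 = (‖b‖ : ℂ) ^ 2 ↔ ‖a‖ = ‖b‖ := by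
  norm_cast
  exact sq_eq_sq₀ (norm_nonneg a) (norm_nonneg b)

theorem cubic_system_iff {c Λ Γ a₁ a₂ : ℂ} (hne : Λ ≠ Γ) :
    (c * a₁ + (Λ * (‖a₁‖ : ℂ) ^ 2 + Γ * (‖a₂‖ : ℂ) ^ 2) * a₁ = 0 ∧
      c * a₂ + (Λ * (‖a₂‖ : ℂ) ^ 2 + Γ * (‖a₁‖ : ℂ) ^ 2) * a₂ = 0) ↔
    ((a₁ = 0 ∧ a₂ = 0) ∨ (a₁ = 0 ∧ a₂ ≠ 0 ∧ Λ * (‖a₂‖ : ℂ) ^ 2 = -c) ∨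
      (a₂ = 0 ∧ a₁ ≠ 0 ∧ Λ * (‖a₁‖ : ℂ) ^ 2 = -c) ∨
      (‖a₁‖ = ‖a₂‖ ∧ (Λ + Γ) * (‖a₁‖ : ℂ) ^ 2 = -c)) := by
  rw [mul_add_mul_eq_zero_iff, mul_add_mul_eq_zero_iff, ← ofReal_norm_sq_eq_iff,
    ← bracket_pair_eq_zero_iff hne]
  by_cases h₁ : a₁ = 0 <;> by_cases h₂ : a₂ = 0 <;>
    simp [h₁, h₂, eq_neg_iff_add_eq_zero, add_comm c]
  tauto

theorem stmt6_general (κ χ : ℝ) (Λ Γ : ℂ) (hne : Λ ≠ Γ) (ε μ : ℝ) (a₁ a₂ : ℂ) :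
    (((ε * κ : ℂ) + Complex.I * (χ * μ : ℂ)) * a₁ +
        (Λ * (‖a₁‖ : ℂ) ^ 2 + Γ * (‖a₂‖ : ℂ) ^ 2) * a₁ = 0 ∧
     ((ε * κ : ℂ) + Complex.I * (χ * μ : ℂ)) * a₂ +
        (Λ * (‖a₂‖ : ℂ) ^ 2 + Γ * (‖a₁‖ : ℂ) ^ 2) * a₂ = 0)
    ↔ ((a₁ = 0 ∧ a₂ = 0) ∨
       (a₁ = 0 ∧ a₂ ≠ 0 ∧
         Λ * (‖a₂‖ : ℂ) ^ 2 = -((ε * κ : ℂ) + Complex.I * (χ * μ : ℂ))) ∨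
       (a₂ = 0 ∧ a₁ ≠ 0 ∧
         Λ * (‖a₁‖ : ℂ) ^ 2 = -((ε * κ : ℂ) + Complex.I * (χ * μ : ℂ))) ∨
       (‖a₁‖ = ‖a₂‖ ∧
         (Λ + Γ) * (‖a₁‖ : ℂ) ^ 2 = -((ε * κ : ℂ) + Complex.I * (χ * μ : ℂ)))) :=
  cubic_system_iff hne

/-- Complete characterization of solutions of the truncated cubic
`O(2)` Hopf system in `(a₁, a₂) ∈ ℂ²`. -/
theorem stmt6 (κ χ : ℝ) (hκ : κ ≠ 0) (hχ : χ ≠ 0) (Λ Γ : ℂ)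
    (hΛ : Λ.re ≠ 0) (hΛΓ : (Λ + Γ).re ≠ 0) (hne : Λ ≠ Γ) (ε μ : ℝ) (a₁ a₂ : ℂ) :
    (((ε * κ : ℂ) + Complex.I * (χ * μ : ℂ)) * a₁ +
        (Λ * (‖a₁‖ : ℂ) ^ 2 + Γ * (‖a₂‖ : ℂ) ^ 2) * a₁ = 0 ∧
     ((ε * κ : ℂ) + Complex.I * (χ * μ : ℂ)) * a₂ +
        (Λ * (‖a₂‖ : ℂ) ^ 2 + Γ * (‖a₁‖ : ℂ) ^ 2) * a₂ = 0)
    ↔ ((a₁ = 0 ∧ a₂ = 0) ∨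
       (a₁ = 0 ∧ a₂ ≠ 0 ∧
         Λ * (‖a₂‖ : ℂ) ^ 2 = -((ε * κ : ℂ) + Complex.I * (χ * μ : ℂ))) ∨
       (a₂ = 0 ∧ a₁ ≠ 0 ∧
         Λ * (‖a₁‖ : ℂ) ^ 2 = -((ε * κ : ℂ) + Complex.I * (χ * μ : ℂ))) ∨
       (‖a₁‖ = ‖a₂‖ ∧
         (Λ + Γ) * (‖a₁‖ : ℂ) ^ 2 = -((ε * κ : ℂ) + Complex.I * (χ * μ : ℂ)))) :=
  stmt6_general κ χ Λ Γ hne ε μ a₁ a₂
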